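/- Let F ⊆ ℝ^d be a nonempty compact convex set and let B(v, r) be a closed ball containing F such that v ∉ F. Then there exists a closed ball of radius strictly less than r containing F. -/

import Mathlib

/-!
Let `p` be the point of `F` nearest to `v`, at distance `δ > 0`. The projection inequality
`⟪v - p, x - p⟫ ≤ 0` for `x ∈ F` puts `F` on the far side of the hyperplane through `p` orthogonal
to `v - p`, and Pythagoras then gives `‖x - p‖² + δ² ≤ ‖x - v‖² ≤ r²`. So `F` lies in the ball
of radius `√(r² - δ²) < r` around `p`.
-/

open Metric
open scoped RealInnerProductSpace

variable {E : Type*} [NormedAddCommGroup E] [InnerProductSpace ℝ E]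

theorem norm_sub_sq_add_norm_sub_sq_le_of_inner_nonpos {v p x : E}
    (h : ⟪v - p, x - p⟫ ≤ 0) : ‖x - p‖ ^ 2 + ‖v - p‖ ^ 2 ≤ ‖x - v‖ ^ 2 := by
  have hx : x - v = (x - p) - (v - p) := by abel
  rw [hx, norm_sub_sq_real (x - p), real_inner_comm]
  linarith

theorem subset_closedBall_sqrt_of_inner_nonpos {F : Set E} {v p : E} {r : ℝ}
    (hsub : F ⊆ closedBall v r) (hp : ∀ x ∈ F, ⟪v - p, x - p⟫ ≤ 0) :
    F ⊆ closedBall p √(r ^ 2 - ‖v - p‖ ^ 2) := by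
  intro x hx
  have hxv : ‖x - v‖ ≤ r := by simpa [dist_eq_norm] using hsub hx
  have hxv_sq : ‖x - v‖ ^ 2 ≤ r ^ 2 := pow_le_pow_left₀ (norm_nonneg _) hxv 2
  have := norm_sub_sq_add_norm_sub_sq_le_of_inner_nonpos (hp x hx)
  rw [mem_closedBall, dist_eq_norm]
  exact Real.le_sqrt_of_sq_le (by linarith)

theorem exists_closedBall_radius_lt_of_notMem {F : Set E} (hne : F.Nonempty)
    (hcomplete : IsComplete F) (hconv : Convex ℝ F) {v : E} {r : ℝ}
    (hsub : F ⊆ closedBall v r) (hv : v ∉ F) :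
    ∃ (v' : E) (r' : ℝ), r' < r ∧ F ⊆ closedBall v' r' := by
  obtain ⟨p, hpF, hp⟩ := exists_norm_eq_iInf_of_complete_convex hne hcomplete hconv v
  have hproj := (norm_eq_iInf_iff_real_inner_le_zero hconv hpF).mp hp
  have hvp : 0 < ‖v - p‖ := norm_pos_iff.2 (sub_ne_zero.2 fun h => hv (h ▸ hpF))
  have hr : 0 < r := hvp.trans_le (by simpa [dist_eq_norm'] using hsub hpF)
  refine ⟨p, √(r ^ 2 - ‖v - p‖ ^ 2), (Real.sqrt_lt' hr).2 ?_,
    subset_closedBall_sqrt_of_inner_nonpos hsub hproj⟩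
  linarith [pow_pos hvp 2]

theorem stmt_11 (d : ℕ) (F : Set (EuclideanSpace ℝ (Fin d)))
    (hne : F.Nonempty) (hcpt : IsCompact F) (hconv : Convex ℝ F)
    (v : EuclideanSpace ℝ (Fin d)) (r : ℝ)
    (hsub : F ⊆ Metric.closedBall v r) (hv : v ∉ F) :
    ∃ (v' : EuclideanSpace ℝ (Fin d)) (r' : ℝ),
      r' < r ∧ F ⊆ Metric.closedBall v' r' :=
  exists_closedBall_radius_lt_of_notMem hne hcpt.isComplete hconv hsub hv
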